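/- Let ξ₁, ξ₂, ξ₃ ∈ ℝ² and τ₁, τ₂, τ₃ ∈ ℝ satisfy ξ₁+ξ₂+ξ₃ = 0 and τ₁+τ₂+τ₃ = 0, with ξ₁, ξ₂ ≠ 0. Then for any choice of signs ±₁, ±₂ there is a universal constant C such that ∠(±₁ξ₁, ±₂ξ₂) ≤ C ((⟨τ₁ ±₁ |ξ₁|⟩ + ⟨τ₂ ±₂ |ξ₂|⟩ + ⟨|τ₃| − |ξ₃|⟩)/min(⟨ξ₁⟩, ⟨ξ₂⟩))^{1/2}. -/

import Mathlib

noncomputable section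
open InnerProductGeometry

abbrev E2 := EuclideanSpace ℝ (Fin 2)

/-- Japanese bracket ⟨x⟩ = (1+x²)^{1/2}. -/
def jb (x : ℝ) : ℝ := Real.sqrt (1 + x ^ 2)

/-!
With `a = |ξ₁|`, `b = |ξ₂|`, `c = |ξ₃| = |ξ₁ + ξ₂|` and `e = |±₁a ±₂b|`, the law of cosines gives
`|e² - c²| = 2ab(1 - cos θ)` for `θ = ∠(±₁ξ₁, ±₂ξ₂)`; as `e, c ≤ a + b`, this gives
`ab(1 - cos θ) ≤ (a + b)|e - c|`.
Since `τ₃ = -(τ₁ ±₁ a) - (τ₂ ±₂ b) + (±₁a ±₂b)`, the distance `|e - c|` is at most the sum `S` of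
the three moduli `|τ₁ ±₁ a|`, `|τ₂ ±₂ b|`, `||τ₃| - c|`. With `1 - cos θ ≥ 2θ²/π²` this yields
`θ² min(a, b) ≲ S`, and together with `θ ≤ π` we get `θ²⟨min(a, b)⟩ ≲ 1 + S`, which is bounded by
the sum of the Japanese brackets.
-/

open Real

lemma one_le_jb (x : ℝ) : 1 ≤ jb x :=
  Real.one_le_sqrt.mpr (by nlinarith [sq_nonneg x])

lemma abs_le_jb (x : ℝ) : |x| ≤ jb x :=
  Real.abs_le_sqrt (by linarith)

lemma jb_le_one_add_abs (x : ℝ) : jb x ≤ 1 + |x| :=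
  Real.sqrt_le_iff.mpr ⟨by positivity, by nlinarith [sq_abs x, abs_nonneg x]⟩

lemma abs_abs_add_sub_le_of_add_add_eq_zero {τ₁ τ₂ τ₃ : ℝ} (s₁ s₂ c : ℝ)
    (hτ : τ₁ + τ₂ + τ₃ = 0) :
    |(|s₁ + s₂| - c)| ≤ |τ₁ + s₁| + |τ₂ + s₂| + |(|τ₃| - c)| := by
  have hτ₃ : |(|τ₃| - |s₁ + s₂|)| ≤ |τ₁ + s₁| + |τ₂ + s₂| :=
    calc |(|τ₃| - |s₁ + s₂|)| ≤ |τ₃ - (s₁ + s₂)| := abs_abs_sub_abs_le_abs_sub _ _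
      _ = |-(τ₁ + s₁) + -(τ₂ + s₂)| := by congr 1; linarith
      _ ≤ |τ₁ + s₁| + |τ₂ + s₂| := by
        simpa only [abs_neg] using abs_add_le (-(τ₁ + s₁)) (-(τ₂ + s₂))
  calc |(|s₁ + s₂| - c)| ≤ |(|s₁ + s₂| - |τ₃|)| + |(|τ₃| - c)| := abs_sub_le _ _ _
    _ ≤ |τ₁ + s₁| + |τ₂ + s₂| + |(|τ₃| - c)| := by rw [abs_sub_comm]; linarith

lemma sq_le_pi_sq_div_two_mul_one_sub_cos {θ : ℝ} (hθ : |θ| ≤ π) :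
    θ ^ 2 ≤ π ^ 2 / 2 * (1 - cos θ) := by
  have h := cos_le_one_sub_mul_cos_sq hθ
  calc θ ^ 2 = π ^ 2 / 2 * (2 / π ^ 2 * θ ^ 2) := by field_simp
    _ ≤ π ^ 2 / 2 * (1 - cos θ) := by gcongr; linarith

section InnerProductSpace

variable {F : Type*} [NormedAddCommGroup F] [InnerProductSpace ℝ F]

lemma norm_mul_norm_mul_cos_angle_smul_smul (x y : F) {σ₁ σ₂ : ℝ} (h₁ : |σ₁| = 1)
    (h₂ : |σ₂| = 1) :
    ‖x‖ * ‖y‖ * cos (angle (σ₁ • x) (σ₂ • y)) = σ₁ * σ₂ * inner ℝ x y := by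
  have h := cos_angle_mul_norm_mul_norm (σ₁ • x) (σ₂ • y)
  rw [norm_smul, norm_smul, Real.norm_eq_abs, Real.norm_eq_abs, h₁, h₂, real_inner_smul_left,
    real_inner_smul_right] at h
  linarith

lemma norm_mul_norm_mul_one_sub_cos_angle_smul_smul_le (x y : F) {σ₁ σ₂ : ℝ} (h₁ : |σ₁| = 1)
    (h₂ : |σ₂| = 1) :
    ‖x‖ * ‖y‖ * (1 - cos (angle (σ₁ • x) (σ₂ • y))) ≤
      (‖x‖ + ‖y‖) * |(|σ₁ * ‖x‖ + σ₂ * ‖y‖| - ‖x + y‖)| := by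
  set a := ‖x‖
  set b := ‖y‖
  set c := ‖x + y‖
  set e := |σ₁ * a + σ₂ * b|
  set d := a * b * (1 - cos (angle (σ₁ • x) (σ₂ • y)))
  have hσ₁ : σ₁ ^ 2 = 1 := by rw [← sq_abs, h₁, one_pow]
  have hσ₂ : σ₂ ^ 2 = 1 := by rw [← sq_abs, h₂, one_pow]
  have hd : d = a * b - σ₁ * σ₂ * inner ℝ x y := by
    simp only [d]
    rw [mul_one_sub, norm_mul_norm_mul_cos_angle_smul_smul x y h₁ h₂]
  have hd₀ : 0 ≤ d := by
    have : |σ₁ * σ₂ * inner ℝ x y| ≤ a * b := by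
      rw [abs_mul, abs_mul, h₁, h₂, one_mul, one_mul]; exact abs_real_inner_le_norm x y
    linarith [le_abs_self (σ₁ * σ₂ * inner ℝ x y)]
  have hc : c ^ 2 = a ^ 2 + b ^ 2 + 2 * inner ℝ x y := by
    rw [norm_add_sq_real]; ring
  have he : e ^ 2 = a ^ 2 + b ^ 2 + 2 * σ₁ * σ₂ * (a * b) := by
    rw [sq_abs]; linear_combination a ^ 2 * hσ₁ + b ^ 2 * hσ₂
  have hde : 2 * d = |e - c| * (e + c) := by
    have hsq : (e - c) * (e + c) = σ₁ * σ₂ * (2 * d) := by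
      rw [hd]
      linear_combination he - hc + 2 * inner ℝ x y * σ₂ ^ 2 * hσ₁ + 2 * inner ℝ x y * hσ₂
    calc 2 * d = |σ₁ * σ₂ * (2 * d)| := by
          rw [abs_mul, abs_mul, h₁, h₂, abs_of_nonneg (by linarith)]; ring
      _ = |e - c| * (e + c) := by
          rw [← hsq, abs_mul, abs_of_nonneg (by positivity : 0 ≤ e + c)]
  have hea : e ≤ a + b := by
    calc e ≤ |σ₁ * a| + |σ₂ * b| := abs_add_le _ _
      _ = a + b := by rw [abs_mul, abs_mul, h₁, h₂, abs_norm, abs_norm, one_mul, one_mul]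
  have hca : c ≤ a + b := norm_add_le x y
  nlinarith [abs_nonneg (e - c)]

end InnerProductSpace

lemma sq_mul_one_add_min_le {a b θ S : ℝ} (ha : 0 < a) (hb : 0 < b) (hθ : |θ| ≤ π)
    (hS : 0 ≤ S) (h : a * b * (1 - cos θ) ≤ (a + b) * S) :
    θ ^ 2 * (1 + min a b) ≤ π ^ 2 * (1 + S) := by
  set m := min a b
  have hm : m * (a + b) ≤ 2 * (a * b) := by
    nlinarith [min_le_left a b, min_le_right a b]
  have hm_cos : m * (1 - cos θ) ≤ 2 * S := by
    have hab : 0 < a * b := mul_pos ha hb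
    refine le_of_mul_le_mul_left ?_ hab
    nlinarith [mul_le_mul_of_nonneg_left h (lt_min ha hb).le]
  have hθ_sq := sq_le_pi_sq_div_two_mul_one_sub_cos hθ
  have hθπ : θ ^ 2 ≤ π ^ 2 := sq_le_sq' (abs_le.mp hθ).1 (abs_le.mp hθ).2
  nlinarith [mul_le_mul_of_nonneg_left hθ_sq (lt_min ha hb).le]

lemma le_mul_sqrt_div_of_sq_mul_le {θ K N D : ℝ} (hK : 0 ≤ K) (hD : 0 < D)
    (h : θ ^ 2 * D ≤ K ^ 2 * N) : θ ≤ K * √(N / D) := by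
  have : θ ^ 2 ≤ K ^ 2 * (N / D) := by
    rw [← mul_div_assoc, le_div_iff₀ hD]; exact h
  calc θ ≤ √(K ^ 2 * (N / D)) := Real.le_sqrt_of_sq_le this
    _ = K * √(N / D) := by rw [Real.sqrt_mul (sq_nonneg K), Real.sqrt_sq hK]

/-- Selberg's angle estimate: for ξ₁+ξ₂+ξ₃ = 0, τ₁+τ₂+τ₃ = 0, ξ₁, ξ₂ ≠ 0 and any
signs ±₁, ±₂ there is a universal constant C with
∠(±₁ξ₁, ±₂ξ₂) ≤ C ((⟨τ₁ ±₁ |ξ₁|⟩ + ⟨τ₂ ±₂ |ξ₂|⟩ + ⟨|τ₃| − |ξ₃|⟩)/min(⟨ξ₁⟩,⟨ξ₂⟩))^{1/2}. -/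
theorem angle_estimate :
    ∃ C > 0, ∀ (ξ₁ ξ₂ ξ₃ : E2) (τ₁ τ₂ τ₃ σ₁ σ₂ : ℝ),
      (σ₁ = 1 ∨ σ₁ = -1) → (σ₂ = 1 ∨ σ₂ = -1) →
      ξ₁ + ξ₂ + ξ₃ = 0 → τ₁ + τ₂ + τ₃ = 0 → ξ₁ ≠ 0 → ξ₂ ≠ 0 →
      InnerProductGeometry.angle (σ₁ • ξ₁) (σ₂ • ξ₂) ≤
        C * Real.sqrt ((jb (τ₁ + σ₁ * ‖ξ₁‖) + jb (τ₂ + σ₂ * ‖ξ₂‖) +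
          jb (|τ₃| - ‖ξ₃‖)) / min (jb ‖ξ₁‖) (jb ‖ξ₂‖)) := by
  refine ⟨√2 * π, by positivity, ?_⟩
  intro ξ₁ ξ₂ ξ₃ τ₁ τ₂ τ₃ σ₁ σ₂ hσ₁ hσ₂ hξ hτ h₁ h₂
  set θ := angle (σ₁ • ξ₁) (σ₂ • ξ₂)
  set S := |τ₁ + σ₁ * ‖ξ₁‖| + |τ₂ + σ₂ * ‖ξ₂‖| + |(|τ₃| - ‖ξ₃‖)|
  have hξ₃ : ‖ξ₃‖ = ‖ξ₁ + ξ₂‖ := by rw [eq_neg_of_add_eq_zero_right hξ, norm_neg]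
  have hθ : |θ| ≤ π := by rw [abs_of_nonneg (angle_nonneg _ _)]; exact angle_le_pi _ _
  have hcos : ‖ξ₁‖ * ‖ξ₂‖ * (1 - cos θ) ≤ (‖ξ₁‖ + ‖ξ₂‖) * S := by
    refine (norm_mul_norm_mul_one_sub_cos_angle_smul_smul_le ξ₁ ξ₂
      ((abs_eq zero_le_one).mpr hσ₁) ((abs_eq zero_le_one).mpr hσ₂)).trans ?_
    rw [← hξ₃]
    gcongr
    exact abs_abs_add_sub_le_of_add_add_eq_zero _ _ _ hτ
  have hθ_sq := sq_mul_one_add_min_le (norm_pos_iff.mpr h₁) (norm_pos_iff.mpr h₂) hθ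
    (by positivity) hcos
  set N := jb (τ₁ + σ₁ * ‖ξ₁‖) + jb (τ₂ + σ₂ * ‖ξ₂‖) + jb (|τ₃| - ‖ξ₃‖)
  set D := min (jb ‖ξ₁‖) (jb ‖ξ₂‖)
  have hN : 1 + S ≤ 2 * N := by
    linarith [one_le_jb (τ₁ + σ₁ * ‖ξ₁‖), one_le_jb (τ₂ + σ₂ * ‖ξ₂‖), one_le_jb (|τ₃| - ‖ξ₃‖),
      abs_le_jb (τ₁ + σ₁ * ‖ξ₁‖), abs_le_jb (τ₂ + σ₂ * ‖ξ₂‖), abs_le_jb (|τ₃| - ‖ξ₃‖)]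
  have hD : D ≤ 1 + min ‖ξ₁‖ ‖ξ₂‖ := by
    rw [← min_add_add_left]
    exact min_le_min (by simpa only [abs_norm] using jb_le_one_add_abs ‖ξ₁‖)
      (by simpa only [abs_norm] using jb_le_one_add_abs ‖ξ₂‖)
  have hD₀ : 0 < D := zero_lt_one.trans_le (le_min (one_le_jb _) (one_le_jb _))
  refine le_mul_sqrt_div_of_sq_mul_le (by positivity) hD₀ ?_
  calc θ ^ 2 * D ≤ θ ^ 2 * (1 + min ‖ξ₁‖ ‖ξ₂‖) := by gcongr
    _ ≤ π ^ 2 * (1 + S) := hθ_sq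
    _ ≤ (√2 * π) ^ 2 * N := by
      rw [mul_pow, Real.sq_sqrt zero_le_two]; nlinarith [pi_pos]
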